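/- arXiv:math/0611680 — 6 statements merged into one kernel-verified Lean document; each statement's English description precedes it below -/
import Mathlib

section
/- Let X₁,…,X_{n+1} be real numbers, (φ_j)_{j∈J} a finite family of bounded functions in L²(ℝ), and (ψ_k)_{k∈K} a finite orthonormal family of bounded functions in L²(ℝ). Let S_m be the linear span of the functions (x,y) ↦ φ_j(x)ψ_k(y), j ∈ J, k ∈ K. Consider the Hilbert space H = (L²(ℝ))ⁿ with inner product ⟨u,v⟩ = Σ_{i=1}^n ∫_ℝ u_i v_i, and let W = { (s(X_i,·))_{1≤i≤n} : s ∈ S_m } ⊆ H. For t(x,y) = Σ_{j,k} a_{j,k} φ_j(x)ψ_k(y) in S_m, all partial derivatives of the map (a_{j,k}) ↦ γ_n(Σ_{j,k} a_{j,k} φ_j ⊗ ψ_k) vanish at (a_{j,k}) if and only if the n-tuple (t(X_i,·))_{1≤i≤n} equals the orthogonal projection onto W of the n-tuple (y ↦ Σ_{k∈K} ψ_k(X_{i+1})ψ_k(y))_{1≤i≤n}. -/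
/-!
Writing `t(x, y) = Σₖ cₖ(x) ψₖ(y)` with `cₖ(x) = Σⱼ a_{j,k} φⱼ(x)`, orthonormality of the `ψₖ`
turns every integral in `y` into a finite sum over `k`. The contrast becomes a quadratic
polynomial in the coefficients whose partial derivative in `a_{j,k}` is `-(2/n)` times
`E_{j,k} = Σᵢ φⱼ(Xᵢ) (ψₖ(X_{i+1}) - cₖ(Xᵢ))`, while the pairing of the residual with the element of
`W` of coefficients `b` is `Σ_{j,k} b_{j,k} E_{j,k}`. Both conditions therefore say `E = 0`.
-/

open MeasureTheory Finset

section Orthonormal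

variable {α K : Type*} [MeasurableSpace α] {μ : Measure α} [Fintype K] [DecidableEq K]
  {ψ : K → α → ℝ}

theorem integral_sum_mul_sum_of_orthonormal (hψ_L2 : ∀ k, MemLp (ψ k) 2 μ)
    (hψ_on : ∀ k k', ∫ y, ψ k y * ψ k' y ∂μ = if k = k' then 1 else 0) (c d : K → ℝ) :
    ∫ y, (∑ k, c k * ψ k y) * (∑ k, d k * ψ k y) ∂μ = ∑ k, c k * d k := by
  have hint : ∀ k k', Integrable (fun y => c k * d k' * (ψ k y * ψ k' y)) μ := fun k k' =>
    ((hψ_L2 k).integrable_mul (hψ_L2 k')).const_mul _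
  calc ∫ y, (∑ k, c k * ψ k y) * (∑ k, d k * ψ k y) ∂μ
      = ∫ y, ∑ k, ∑ k', c k * d k' * (ψ k y * ψ k' y) ∂μ := by
        congr 1 with y
        rw [sum_mul_sum]
        exact sum_congr rfl fun k _ => sum_congr rfl fun k' _ => by ring
    _ = ∑ k, ∑ k', c k * d k' * ∫ y, ψ k y * ψ k' y ∂μ := by
        rw [integral_finsetSum _ fun k _ => integrable_finsetSum _ fun k' _ => hint k k']
        refine sum_congr rfl fun k _ => ?_
        rw [integral_finsetSum _ fun k' _ => hint k k']
        simp only [integral_const_mul]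
    _ = ∑ k, c k * d k := by simp [hψ_on]

end Orthonormal

theorem forall_sum_sum_mul_eq_zero_iff {J K : Type*} [Fintype J] [Fintype K]
    (E : J → K → ℝ) : (∀ B : J → K → ℝ, ∑ j, ∑ k, B j k * E j k = 0) ↔ ∀ j k, E j k = 0 := by
  refine ⟨fun h j k => ?_, fun h B => by simp [h]⟩
  have hsq := h E
  simp only [← sq] at hsq
  rw [sum_eq_zero_iff_of_nonneg fun j _ => sum_nonneg fun k _ => sq_nonneg _] at hsq
  exact pow_eq_zero_iff two_ne_zero |>.mp <|
    (sum_eq_zero_iff_of_nonneg fun k _ => sq_nonneg _).mp (hsq j (mem_univ j)) k (mem_univ k)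

theorem hasDerivAt_sq_sub_two_mul_affine (u v w c₀ : ℝ) :
    HasDerivAt (fun c => (u + (c - c₀) * v) ^ 2 - 2 * (u + (c - c₀) * v) * w)
      (2 * (u - w) * v) c₀ := by
  have hline : HasDerivAt (fun c => u + (c - c₀) * v) v c₀ := by
    simpa using (((hasDerivAt_id c₀).sub_const c₀).mul_const v).const_add u
  refine ((hline.fun_pow 2).fun_sub ((hline.const_mul 2).mul_const w)).congr_deriv ?_
  simp only [Nat.cast_ofNat, sub_self, zero_mul, add_zero, Nat.add_one_sub_one, pow_one]
  ring

section Tensor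

variable {J K : Type*} [Fintype J]

def sectionCoeff (φ : J → ℝ → ℝ) (a : J → K → ℝ) (x : ℝ) (k : K) : ℝ :=
  ∑ j, a j k * φ j x

theorem sectionCoeff_ite [DecidableEq J] [DecidableEq K] (φ : J → ℝ → ℝ) (A : J → K → ℝ)
    (j₀ : J) (k₀ : K) (c x : ℝ) (k : K) :
    sectionCoeff φ (fun j k => if j = j₀ ∧ k = k₀ then c else A j k) x k
      = sectionCoeff φ A x k + (c - A j₀ k₀) * (if k = k₀ then φ j₀ x else 0) := by
  rw [← sub_eq_iff_eq_add', sectionCoeff, sectionCoeff, ← sum_sub_distrib]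
  split_ifs with hk
  · subst hk
    rw [Fintype.sum_eq_single j₀ fun j hj => by simp [hj]]
    simp only [and_self, if_true]
    ring
  · simp [hk]

variable [Fintype K]

def tensorFun (φ : J → ℝ → ℝ) (ψ : K → ℝ → ℝ) (a : J → K → ℝ) (p : ℝ × ℝ) : ℝ :=
  ∑ j, ∑ k, a j k * φ j p.1 * ψ k p.2

theorem tensorFun_eq_sum_sectionCoeff (φ : J → ℝ → ℝ) (ψ : K → ℝ → ℝ) (a : J → K → ℝ)
    (x y : ℝ) : tensorFun φ ψ a (x, y) = ∑ k, sectionCoeff φ a x k * ψ k y := by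
  simp only [tensorFun, sectionCoeff, sum_mul]
  exact sum_comm

end Tensor

section Contrast

variable {J K : Type*} [Fintype J] [Fintype K]

noncomputable def contrast (n : ℕ) (X : ℕ → ℝ) (s : ℝ × ℝ → ℝ) : ℝ :=
  (1 / (n : ℝ)) * ∑ i ∈ range n, ((∫ y, s (X i, y) ^ 2) - 2 * s (X i, X (i + 1)))

def contrastResidual (n : ℕ) (X : ℕ → ℝ) (φ : J → ℝ → ℝ) (ψ : K → ℝ → ℝ) (A : J → K → ℝ)
    (j : J) (k : K) : ℝ :=
  ∑ i ∈ range n, φ j (X i) * (ψ k (X (i + 1)) - sectionCoeff φ A (X i) k)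

variable [DecidableEq K] {n : ℕ} {X : ℕ → ℝ} {φ : J → ℝ → ℝ} {ψ : K → ℝ → ℝ}

theorem contrast_tensorFun (hψ_L2 : ∀ k, MemLp (ψ k) 2 (volume : Measure ℝ))
    (hψ_on : ∀ k k', ∫ y, ψ k y * ψ k' y = if k = k' then 1 else 0) (a : J → K → ℝ) :
    contrast n X (tensorFun φ ψ a) = (1 / (n : ℝ)) * ∑ i ∈ range n, ∑ k,
      (sectionCoeff φ a (X i) k ^ 2 - 2 * sectionCoeff φ a (X i) k * ψ k (X (i + 1))) := by
  unfold contrast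
  congr 1
  refine sum_congr rfl fun i _ => ?_
  simp only [tensorFun_eq_sum_sectionCoeff, sq]
  rw [integral_sum_mul_sum_of_orthonormal hψ_L2 hψ_on, sum_sub_distrib, mul_sum]
  simp only [mul_assoc]

theorem sum_integral_sub_mul_tensorFun (hψ_L2 : ∀ k, MemLp (ψ k) 2 (volume : Measure ℝ))
    (hψ_on : ∀ k k', ∫ y, ψ k y * ψ k' y = if k = k' then 1 else 0) (A B : J → K → ℝ) :
    ∑ i ∈ range n, ∫ y, ((∑ k, ψ k (X (i + 1)) * ψ k y) - tensorFun φ ψ A (X i, y))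
        * tensorFun φ ψ B (X i, y)
      = ∑ j, ∑ k, B j k * contrastResidual n X φ ψ A j k := by
  have hsection : ∀ i y, (∑ k, ψ k (X (i + 1)) * ψ k y) - tensorFun φ ψ A (X i, y)
      = ∑ k, (ψ k (X (i + 1)) - sectionCoeff φ A (X i) k) * ψ k y := fun i y => by
    simp only [tensorFun_eq_sum_sectionCoeff, sub_mul, sum_sub_distrib]
  calc _ = ∑ i ∈ range n, ∑ k,
        (ψ k (X (i + 1)) - sectionCoeff φ A (X i) k) * sectionCoeff φ B (X i) k :=
        sum_congr rfl fun i _ => by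
          simp_rw [hsection, tensorFun_eq_sum_sectionCoeff]
          exact integral_sum_mul_sum_of_orthonormal hψ_L2 hψ_on _ _
    _ = ∑ k, ∑ j, ∑ i ∈ range n,
        B j k * (φ j (X i) * (ψ k (X (i + 1)) - sectionCoeff φ A (X i) k)) := by
        rw [sum_comm]
        refine sum_congr rfl fun k _ => ?_
        simp only [sectionCoeff, mul_sum]
        rw [sum_comm]
        exact sum_congr rfl fun j _ => sum_congr rfl fun i _ => by ring
    _ = _ := by simp only [contrastResidual, mul_sum]; exact sum_comm

theorem hasDerivAt_contrast_tensorFun_ite [DecidableEq J]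
    (hψ_L2 : ∀ k, MemLp (ψ k) 2 (volume : Measure ℝ))
    (hψ_on : ∀ k k', ∫ y, ψ k y * ψ k' y = if k = k' then 1 else 0)
    (A : J → K → ℝ) (j₀ : J) (k₀ : K) :
    HasDerivAt (fun c => contrast n X
        (tensorFun φ ψ fun j k => if j = j₀ ∧ k = k₀ then c else A j k))
      (-(2 / (n : ℝ)) * contrastResidual n X φ ψ A j₀ k₀) (A j₀ k₀) := by
  simp only [contrast_tensorFun hψ_L2 hψ_on, sectionCoeff_ite]
  refine (HasDerivAt.fun_sum fun i _ => HasDerivAt.fun_sum fun k _ =>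
    hasDerivAt_sq_sub_two_mul_affine _ _ _ _).const_mul _ |>.congr_deriv ?_
  simp only [mul_ite, mul_zero, sum_ite_eq', mem_univ, if_true, contrastResidual, mul_sum]
  exact sum_congr rfl fun i _ => by ring

end Contrast

theorem contrast_critical_iff_orthogonal_projection_general
    {J K : Type*} [Fintype J] [Fintype K] [DecidableEq J] [DecidableEq K]
    (n : ℕ) (hn : 0 < n) (X : ℕ → ℝ)
    (φ : J → ℝ → ℝ) (ψ : K → ℝ → ℝ)
    (hψ_L2 : ∀ k, MemLp (ψ k) 2 (volume : Measure ℝ))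
    (hψ_on : ∀ k k', ∫ y, ψ k y * ψ k' y = if k = k' then 1 else 0)
    (γ : (ℝ × ℝ → ℝ) → ℝ)
    (hγ : ∀ s, γ s = (1 / (n : ℝ)) * ∑ i ∈ Finset.range n,
      ((∫ y, s (X i, y) ^ 2) - 2 * s (X i, X (i + 1))))
    (A : J → K → ℝ) (t : ℝ × ℝ → ℝ)
    (ht : t = fun p => ∑ j, ∑ k, A j k * φ j p.1 * ψ k p.2) :
    (∀ j₀ k₀, deriv (fun c : ℝ => γ fun p => ∑ j, ∑ k,
        (if j = j₀ ∧ k = k₀ then c else A j k) * φ j p.1 * ψ k p.2) (A j₀ k₀) = 0)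
    ↔ (∀ B : J → K → ℝ,
        ∑ i ∈ Finset.range n, ∫ y,
          ((∑ k, ψ k (X (i + 1)) * ψ k y) - t (X i, y))
            * (∑ j, ∑ k, B j k * φ j (X i) * ψ k y) = 0) := by
  obtain rfl : γ = contrast n X := funext hγ
  subst ht
  have hscale : -(2 / (n : ℝ)) ≠ 0 :=
    neg_ne_zero.mpr (div_ne_zero two_ne_zero (Nat.cast_ne_zero.mpr hn.ne'))
  have hcritical : (∀ j₀ k₀, deriv (fun c => contrast n X
      (tensorFun φ ψ fun j k => if j = j₀ ∧ k = k₀ then c else A j k)) (A j₀ k₀) = 0)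
      ↔ ∀ j k, contrastResidual n X φ ψ A j k = 0 := by
    simp only [(hasDerivAt_contrast_tensorFun_ite hψ_L2 hψ_on A _ _).deriv, mul_eq_zero,
      hscale, false_or]
  have horthogonal : (∀ B, ∑ i ∈ range n, ∫ y, ((∑ k, ψ k (X (i + 1)) * ψ k y)
      - tensorFun φ ψ A (X i, y)) * tensorFun φ ψ B (X i, y) = 0)
      ↔ ∀ j k, contrastResidual n X φ ψ A j k = 0 := by
    simp only [sum_integral_sub_mul_tensorFun hψ_L2 hψ_on, forall_sum_sum_mul_eq_zero_iff]
  exact hcritical.trans horthogonal.symm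

/-- Proposition 1 of the paper.  The partial derivatives of the
contrast `γₙ` (as a function of the coefficients `a_{j,k}` of `t ∈ S_m`) all vanish
iff the `n`-tuple `(t(Xᵢ,·))ᵢ` is the orthogonal projection, in `H = (L²(ℝ))ⁿ` with
inner product `⟨u,v⟩ = Σᵢ ∫ uᵢ vᵢ`, of the tuple `(y ↦ Σₖ ψₖ(X_{i+1})ψₖ(y))ᵢ` onto
`W = {(s(Xᵢ,·))ᵢ : s ∈ S_m}`.  Since `(t(Xᵢ,·))ᵢ` already belongs to `W`, being the
orthogonal projection is expressed by its defining property: the difference is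
orthogonal to every element `(s(Xᵢ,·))ᵢ` of `W`. -/
theorem contrast_critical_iff_orthogonal_projection
    {J K : Type*} [Fintype J] [Fintype K] [DecidableEq J] [DecidableEq K]
    (n : ℕ) (hn : 0 < n) (X : ℕ → ℝ)
    (φ : J → ℝ → ℝ) (ψ : K → ℝ → ℝ)
    (hφ_meas : ∀ j, Measurable (φ j)) (hψ_meas : ∀ k, Measurable (ψ k))
    (hφ_L2 : ∀ j, MemLp (φ j) 2 (volume : Measure ℝ))
    (hψ_L2 : ∀ k, MemLp (ψ k) 2 (volume : Measure ℝ))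
    (hφ_bdd : ∀ j, ∃ C, ∀ x, |φ j x| ≤ C) (hψ_bdd : ∀ k, ∃ C, ∀ y, |ψ k y| ≤ C)
    (hψ_on : ∀ k k', ∫ y, ψ k y * ψ k' y = if k = k' then 1 else 0)
    (γ : (ℝ × ℝ → ℝ) → ℝ)
    (hγ : ∀ s, γ s = (1 / (n : ℝ)) * ∑ i ∈ Finset.range n,
      ((∫ y, s (X i, y) ^ 2) - 2 * s (X i, X (i + 1))))
    (A : J → K → ℝ) (t : ℝ × ℝ → ℝ)
    (ht : t = fun p => ∑ j, ∑ k, A j k * φ j p.1 * ψ k p.2) :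
    (∀ j₀ k₀, deriv (fun c : ℝ => γ fun p => ∑ j, ∑ k,
        (if j = j₀ ∧ k = k₀ then c else A j k) * φ j p.1 * ψ k p.2) (A j₀ k₀) = 0)
    ↔ (∀ B : J → K → ℝ,
        ∑ i ∈ Finset.range n, ∫ y,
          ((∑ k, ψ k (X (i + 1)) * ψ k y) - t (X i, y))
            * (∑ j, ∑ k, B j k * φ j (X i) * ψ k y) = 0) :=
  contrast_critical_iff_orthogonal_projection_general n hn X φ ψ hψ_L2 hψ_on γ hγ A t ht
end

section
/- Let X₁,…,X_{n+1} be real numbers, (ψ_k)_{k∈K} a finite orthonormal family of bounded functions in L²(ℝ) with sup_{y∈ℝ} Σ_{k∈K} ψ_k(y)² ≤ B, and S_m the linear span of functions (x,y) ↦ φ_j(x)ψ_k(y) for a finite family (φ_j)_{j∈J} of bounded functions in L²(ℝ). Let π : ℝ² → [0,∞) be measurable with ∫_ℝ π(x,y) dy = 1 for every x, let A ⊆ ℝ² be measurable with sup_{(x,y)∈A} π(x,y) ≤ c < ∞, and assume y ↦ π(x,y)1_A(x,y) ∈ L²(ℝ) for each x. Let H = (L²(ℝ))ⁿ with inner product ⟨u,v⟩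 = Σ_{i=1}^n ∫_ℝ u_i v_i and W = {(s(X_i,·))_{1≤i≤n} : s ∈ S_m}. If π̂ ∈ S_m is such that (π̂(X_i,·))_{1≤i≤n} is the orthogonal projection onto W of the n-tuple (y ↦ Σ_{k∈K} ψ_k(X_{i+1})ψ_k(y))_{1≤i≤n}, then (1/n) Σ_{i=1}^n ∫_ℝ ( π(X_i,y)1_A(X_i,y) − π̂(X_i,y) )² dy ≤ c + 4B. -/
/-!
Write `π̂(Xᵢ,·) = ∑ₖ bᵢₖ ψₖ`. By orthonormality the projection identity becomes
`∑ᵢ ⟨tᵢ - bᵢ, bᵢ⟩ = 0` for the coefficient vectors `tᵢ = (ψₖ(X_{i+1}))ₖ` of the targets, so by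
Pythagoras `∑ᵢ |bᵢ|² ≤ ∑ᵢ |tᵢ|² ≤ n B`. In row `i`, `u = π 1_A(Xᵢ,·)` is a sub-probability density
bounded by `c` and `v = π̂(Xᵢ,·)` satisfies `|v| ≤ (|bᵢ|² + B) / 2` pointwise, so splitting
`(u - v)² = u (u - 2v) + v²` gives `∫ (u - v)² ≤ c + B + 2 |bᵢ|²`. Summing over the rows yields
the bound `c + 3B`.
-/

open MeasureTheory Finset

theorem abs_sum_mul_le_half_add_sq {ι : Type*} (s : Finset ι) (f g : ι → ℝ) :
    |∑ i ∈ s, f i * g i| ≤ (∑ i ∈ s, f i ^ 2 + ∑ i ∈ s, g i ^ 2) / 2 := by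
  have hsub := sum_nonneg fun i (_ : i ∈ s) => sq_nonneg (f i - g i)
  have hadd := sum_nonneg fun i (_ : i ∈ s) => sq_nonneg (f i + g i)
  simp only [sub_sq, add_sq, sum_add_distrib, sum_sub_distrib, mul_assoc, ← mul_sum] at hsub hadd
  rw [abs_le]
  constructor <;> linarith

theorem sum_sq_le_sum_sq_of_sum_sub_mul_eq_zero {ι : Type*} (s : Finset ι) (f g : ι → ℝ)
    (h : ∑ i ∈ s, (f i - g i) * g i = 0) : ∑ i ∈ s, g i ^ 2 ≤ ∑ i ∈ s, f i ^ 2 := by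
  have hpyth : ∑ i ∈ s, f i ^ 2
      = ∑ i ∈ s, (f i - g i) ^ 2 + 2 * ∑ i ∈ s, (f i - g i) * g i + ∑ i ∈ s, g i ^ 2 := by
    rw [mul_sum, ← sum_add_distrib, ← sum_add_distrib]
    exact sum_congr rfl fun i _ => by ring
  rw [hpyth, h]
  linarith [sum_nonneg fun i (_ : i ∈ s) => sq_nonneg (f i - g i)]

section Integral

variable {α : Type*} [MeasurableSpace α] {μ : Measure α}

theorem integrable_and_integral_le_one_of_le {f g : α → ℝ} (hf : AEStronglyMeasurable f μ)
    (hf_nonneg : 0 ≤ f) (hfg : f ≤ g) (hg : ∫ x, g x ∂μ = 1) :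
    Integrable f μ ∧ ∫ x, f x ∂μ ≤ 1 := by
  have hg_int : Integrable g μ := Integrable.of_integral_ne_zero (by simp [hg])
  have hf_int : Integrable f μ :=
    hg_int.mono' hf (ae_of_all _ fun x => by
      rw [Real.norm_of_nonneg (hf_nonneg x)]; exact hfg x)
  exact ⟨hf_int, hg ▸ integral_mono hf_int hg_int hfg⟩

theorem integral_mul_le_of_integral_le_one {u w : α → ℝ} {L : ℝ} (hu_nonneg : 0 ≤ u)
    (hu_int : Integrable u μ) (hu_one : ∫ x, u x ∂μ ≤ 1)
    (huw : Integrable (fun x => u x * w x) μ) (hw : ∀ x, w x ≤ L) (hL : 0 ≤ L) :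
    ∫ x, u x * w x ∂μ ≤ L :=
  calc ∫ x, u x * w x ∂μ ≤ ∫ x, L * u x ∂μ :=
        integral_mono huw (hu_int.const_mul L) fun x => by
          rw [mul_comm L]; exact mul_le_mul_of_nonneg_left (hw x) (hu_nonneg x)
    _ = L * ∫ x, u x ∂μ := integral_const_mul L _
    _ ≤ L := mul_le_of_le_one_right hL hu_one

variable {K : Type*} [Fintype K] {ψ : K → α → ℝ}

theorem memLp_two_sum_mul (hψ : ∀ k, MemLp (ψ k) 2 μ) (b : K → ℝ) :
    MemLp (fun x => ∑ k, b k * ψ k x) 2 μ :=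
  memLp_finsetSum univ fun k _ => (hψ k).const_mul (b k)

theorem integral_sum_mul_mul_sum_mul [DecidableEq K] (hψ : ∀ k, MemLp (ψ k) 2 μ)
    (hψ_on : ∀ k k', ∫ x, ψ k x * ψ k' x ∂μ = if k = k' then 1 else 0) (b c : K → ℝ) :
    ∫ x, (∑ k, b k * ψ k x) * (∑ k, c k * ψ k x) ∂μ = ∑ k, b k * c k := by
  have hint : ∀ k k', Integrable (fun x => ψ k x * ψ k' x) μ :=
    fun k k' => (hψ k).integrable_mul (hψ k')
  have hexpand : ∀ x, (∑ k, b k * ψ k x) * (∑ k, c k * ψ k x)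
      = ∑ k, ∑ k', b k * c k' * (ψ k x * ψ k' x) := fun x => by
    rw [sum_mul_sum]; exact sum_congr rfl fun k _ => sum_congr rfl fun k' _ => by ring
  simp_rw [hexpand]
  rw [integral_finsetSum _ fun k _ => integrable_finsetSum _ fun k' _ => (hint k k').const_mul _]
  simp_rw [integral_finsetSum _ fun k' _ => (hint _ k').const_mul _, integral_const_mul, hψ_on,
    mul_ite, mul_one, mul_zero, sum_ite_eq, if_pos (mem_univ _)]

theorem integral_sub_sum_mul_sq_le [DecidableEq K] {u : α → ℝ} {c B : ℝ} (hu : MemLp u 2 μ)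
    (hu_int : Integrable u μ) (hu_nonneg : 0 ≤ u) (hu_le : ∀ x, u x ≤ c)
    (hu_one : ∫ x, u x ∂μ ≤ 1) (hc : 0 ≤ c) (hψ : ∀ k, MemLp (ψ k) 2 μ)
    (hψ_on : ∀ k k', ∫ x, ψ k x * ψ k' x ∂μ = if k = k' then 1 else 0)
    (hψ_bd : ∀ x, ∑ k, ψ k x ^ 2 ≤ B) (hB : 0 ≤ B) (b : K → ℝ) :
    ∫ x, (u x - ∑ k, b k * ψ k x) ^ 2 ∂μ ≤ c + B + 2 * ∑ k, b k ^ 2 := by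
  set v : α → ℝ := fun x => ∑ k, b k * ψ k x
  have hv : MemLp v 2 μ := memLp_two_sum_mul hψ b
  have hvv : ∫ x, v x * v x ∂μ = ∑ k, b k ^ 2 := by
    simp only [v, integral_sum_mul_mul_sum_mul hψ hψ_on, sq]
  have hv_le : ∀ x, -v x ≤ (∑ k, b k ^ 2 + B) / 2 := fun x =>
    calc -v x ≤ |v x| := neg_le_abs _
      _ ≤ (∑ k, b k ^ 2 + ∑ k, ψ k x ^ 2) / 2 := abs_sum_mul_le_half_add_sq _ _ _
      _ ≤ (∑ k, b k ^ 2 + B) / 2 := by linarith [hψ_bd x]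
  have hsplit : ∀ x, (u x - v x) ^ 2 = u x * (u x - 2 * v x) + v x * v x := fun x => by ring
  have huw : Integrable (fun x => u x * (u x - 2 * v x)) μ :=
    hu.integrable_mul (hu.sub (hv.const_mul 2))
  have hmain : ∫ x, u x * (u x - 2 * v x) ∂μ ≤ c + (∑ k, b k ^ 2 + B) :=
    integral_mul_le_of_integral_le_one hu_nonneg hu_int hu_one huw
      (fun x => by linarith [hu_le x, hv_le x]) (by positivity)
  calc ∫ x, (u x - v x) ^ 2 ∂μ = ∫ x, u x * (u x - 2 * v x) ∂μ + ∫ x, v x * v x ∂μ := by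
        simp_rw [hsplit]
        exact integral_add huw (hv.integrable_mul hv)
    _ ≤ c + B + 2 * ∑ k, b k ^ 2 := by linarith

end Integral

theorem empirical_risk_deterministic_bound_general
    {J K : Type*} [Fintype J] [Fintype K] [DecidableEq K]
    (n : ℕ) (X : ℕ → ℝ)
    (φ : J → ℝ → ℝ) (ψ : K → ℝ → ℝ)
    (hψ_L2 : ∀ k, MemLp (ψ k) 2 (volume : Measure ℝ))
    (hψ_on : ∀ k k' : K, (∫ y, ψ k y * ψ k' y) = if k = k' then 1 else 0)
    (B : ℝ) (hB : 0 < B) (hψ_bd : ∀ y, ∑ k, ψ k y ^ 2 ≤ B)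
    (π : ℝ × ℝ → ℝ) (hπ_nonneg : ∀ p, 0 ≤ π p)
    (hπ_marg : ∀ x, ∫ y, π (x, y) = 1)
    (A : Set (ℝ × ℝ))
    (c : ℝ) (hc : 0 ≤ c) (hπA : ∀ p ∈ A, π p ≤ c)
    (hπL2 : ∀ x, MemLp (fun y => A.indicator π (x, y)) 2 (volume : Measure ℝ))
    (πhat : ℝ × ℝ → ℝ)
    (hπhat_mem : ∃ Amat : J → K → ℝ,
      πhat = fun p => ∑ j, ∑ k, Amat j k * φ j p.1 * ψ k p.2)
    (hproj : ∀ Bmat : J → K → ℝ,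
      ∑ i ∈ Finset.range n, ∫ y,
        ((∑ k, ψ k (X (i + 1)) * ψ k y) - πhat (X i, y))
          * (∑ j, ∑ k, Bmat j k * φ j (X i) * ψ k y) = 0) :
    (1 / (n : ℝ)) * ∑ i ∈ Finset.range n,
        ∫ y, (A.indicator π (X i, y) - πhat (X i, y)) ^ 2 ≤ c + 4 * B := by
  obtain ⟨a, rfl⟩ := hπhat_mem
  set b : ℕ → K → ℝ := fun i k => ∑ j, a j k * φ j (X i)
  have hπhat : ∀ i y, ∑ j, ∑ k, a j k * φ j (X i) * ψ k y = ∑ k, b i k * ψ k y := fun i y => by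
    rw [sum_comm]; simp only [b, sum_mul]
  have hcoef : ∑ i ∈ range n, ∑ k, b i k ^ 2 ≤ n * B := by
    have horth := hproj a
    simp only [hπhat, ← sum_sub_distrib, ← sub_mul,
      integral_sum_mul_mul_sum_mul hψ_L2 hψ_on] at horth
    calc ∑ i ∈ range n, ∑ k, b i k ^ 2 ≤ ∑ i ∈ range n, ∑ k, ψ k (X (i + 1)) ^ 2 := by
          simpa only [sum_product] using sum_sq_le_sum_sq_of_sum_sub_mul_eq_zero
            (range n ×ˢ univ) (fun p => ψ p.2 (X (p.1 + 1))) (fun p => b p.1 p.2)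
            (by rwa [sum_product])
      _ ≤ n * B := by simpa using sum_le_sum fun i (_ : i ∈ range n) => hψ_bd (X (i + 1))
  have hrow : ∀ i, ∫ y, (A.indicator π (X i, y) - ∑ k, b i k * ψ k y) ^ 2
      ≤ c + B + 2 * ∑ k, b i k ^ 2 := fun i => by
    have hu_nonneg : ∀ y, 0 ≤ A.indicator π (X i, y) :=
      fun y => Set.indicator_nonneg (fun p _ => hπ_nonneg p) _
    obtain ⟨hint, hone⟩ := integrable_and_integral_le_one_of_le (hπL2 (X i)).1 hu_nonneg
      (fun y => Set.indicator_le_self' (fun p _ => hπ_nonneg p) _) (hπ_marg (X i))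
    exact integral_sub_sum_mul_sq_le (hπL2 (X i)) hint hu_nonneg
      (fun y => Set.indicator_apply_le' (hπA _) fun _ => hc) hone hc hψ_L2 hψ_on hψ_bd hB.le (b i)
  simp only [hπhat]
  rw [one_div_mul_eq_div]
  refine div_le_of_le_mul₀ n.cast_nonneg (by positivity) ?_
  calc _ ≤ ∑ i ∈ range n, (c + B + 2 * ∑ k, b i k ^ 2) := sum_le_sum fun i _ => hrow i
    _ = n * (c + B) + 2 * ∑ i ∈ range n, ∑ k, b i k ^ 2 := by
        rw [sum_add_distrib, ← mul_sum, sum_const, card_range, nsmul_eq_mul]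
    _ ≤ (c + 4 * B) * n := by nlinarith

/-- inequality (10) of the paper.  If `π̂ ∈ S_m` is the least-squares
estimator, i.e. `(π̂(Xᵢ,·))ᵢ` is the orthogonal projection (in `H = (L²(ℝ))ⁿ`) onto
`W = {(s(Xᵢ,·))ᵢ : s ∈ S_m}` of the tuple `(y ↦ Σₖ ψₖ(X_{i+1})ψₖ(y))ᵢ` — expressed by
its defining property that the difference is orthogonal to every element of `W` — then
`(1/n) Σᵢ ∫ (π1_A(Xᵢ,y) − π̂(Xᵢ,y))² dy ≤ c + 4B`. -/
theorem empirical_risk_deterministic_bound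
    {J K : Type*} [Fintype J] [Fintype K] [DecidableEq K]
    (n : ℕ) (hn : 0 < n) (X : ℕ → ℝ)
    (φ : J → ℝ → ℝ) (ψ : K → ℝ → ℝ)
    (hφ_meas : ∀ j, Measurable (φ j)) (hψ_meas : ∀ k, Measurable (ψ k))
    (hφ_L2 : ∀ j, MemLp (φ j) 2 (volume : Measure ℝ))
    (hψ_L2 : ∀ k, MemLp (ψ k) 2 (volume : Measure ℝ))
    (hφ_bdd : ∀ j, ∃ C, ∀ x, |φ j x| ≤ C)
    (hψ_on : ∀ k k' : K, (∫ y, ψ k y * ψ k' y) = if k = k' then 1 else 0)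
    (B : ℝ) (hB : 0 < B) (hψ_bd : ∀ y, ∑ k, ψ k y ^ 2 ≤ B)
    (π : ℝ × ℝ → ℝ) (hπ_meas : Measurable π) (hπ_nonneg : ∀ p, 0 ≤ π p)
    (hπ_marg : ∀ x, ∫ y, π (x, y) = 1)
    (A : Set (ℝ × ℝ)) (hA : MeasurableSet A)
    (c : ℝ) (hc : 0 ≤ c) (hπA : ∀ p ∈ A, π p ≤ c)
    (hπL2 : ∀ x, MemLp (fun y => A.indicator π (x, y)) 2 (volume : Measure ℝ))
    (πhat : ℝ × ℝ → ℝ)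
    (hπhat_mem : ∃ Amat : J → K → ℝ,
      πhat = fun p => ∑ j, ∑ k, Amat j k * φ j p.1 * ψ k p.2)
    (hproj : ∀ Bmat : J → K → ℝ,
      ∑ i ∈ Finset.range n, ∫ y,
        ((∑ k, ψ k (X (i + 1)) * ψ k y) - πhat (X i, y))
          * (∑ j, ∑ k, Bmat j k * φ j (X i) * ψ k y) = 0) :
    (1 / (n : ℝ)) * ∑ i ∈ Finset.range n,
        ∫ y, (A.indicator π (X i, y) - πhat (X i, y)) ^ 2 ≤ c + 4 * B :=
  empirical_risk_deterministic_bound_general n X φ ψ hψ_L2 hψ_on B hB hψ_bd π hπ_nonneg hπ_marg A c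
    hc hπA hπL2 πhat hπhat_mem hproj
end

section
/- Let F and H be finite-dimensional subspaces of L²(ℝ) consisting of bounded functions, let A₂ ⊆ ℝ be measurable, and assume every element of H vanishes outside A₂. Suppose there are constants Φ₁, Φ₂ > 0 such that ‖u‖_∞² ≤ Φ₁ ∫ u² for all u ∈ F and sup_{y∈A₂} |v(y)|² ≤ Φ₂ ∫ v² for all v ∈ H. Then every t in the linear span of { (x,y) ↦ u(x)v(y) : u ∈ F, v ∈ H } satisfies ‖t‖_∞² ≤ Φ₁ Φ₂ ∫∫ t²(x,y) dx dy. -/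
open MeasureTheory

/-! Each slice `y ↦ t (x, y)` lies in `H` and each slice `x ↦ t (x, z)` lies in `F`. Applying the
bound on `H` to the first, then the bound on `F` to the second and integrating in `z`, gives
`t (x, y)² ≤ Φ₂ ∫ t (x, z)² dz ≤ Φ₂ Φ₁ ∫∫ t²` by Fubini. -/

variable {α β : Type*}

section Slices

variable {R : Type*} [CommSemiring R] {F : Submodule R (α → R)} {H : Submodule R (β → R)}

variable (F H) in
def productSpan : Submodule R (α × β → R) :=
  Submodule.span R {g | ∃ u ∈ F, ∃ v ∈ H, g = fun p => u p.1 * v p.2}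

lemma productSpan_slice_mem_left {t : α × β → R} (ht : t ∈ productSpan F H) (y : β) :
    (fun x => t (x, y)) ∈ F := by
  suffices productSpan F H ≤ F.comap (LinearMap.funLeft R R (fun x => (x, y))) from this ht
  refine Submodule.span_le.mpr ?_
  rintro _ ⟨u, hu, v, -, rfl⟩
  change (fun x => u x * v y) ∈ F
  convert F.smul_mem (v y) hu using 1
  exact funext fun x => mul_comm _ _

lemma productSpan_slice_mem_right {t : α × β → R} (ht : t ∈ productSpan F H) (x : α) :
    (fun y => t (x, y)) ∈ H := by
  suffices productSpan F H ≤ H.comap (LinearMap.funLeft R R (Prod.mk x)) from this ht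
  refine Submodule.span_le.mpr ?_
  rintro _ ⟨u, -, v, hv, rfl⟩
  exact H.smul_mem (u x) hv

end Slices

variable [MeasurableSpace α] [MeasurableSpace β] {μ : Measure α} {ν : Measure β}

lemma memLp_two_of_mem_productSpan {F : Submodule ℝ (α → ℝ)} {H : Submodule ℝ (β → ℝ)}
    (hF : ∀ u ∈ F, MemLp u 2 μ) (hH : ∀ v ∈ H, MemLp v 2 ν)
    {t : α × β → ℝ} (ht : t ∈ productSpan F H) : MemLp t 2 (μ.prod ν) := by
  induction ht using Submodule.span_induction with
  | mem _ hg =>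
    obtain ⟨u, hu, v, hv, rfl⟩ := hg
    have hmeas := (hF u hu).1.comp_fst.mul ((hH v hv).1.comp_snd (μ := μ))
    refine (memLp_two_iff_integrable_sq (f := fun p : α × β => u p.1 * v p.2) hmeas).mpr ?_
    simpa only [mul_pow] using (hF u hu).integrable_sq.mul_prod (hH v hv).integrable_sq
  | zero => exact MemLp.zero
  | add _ _ _ _ hf hg => exact hf.add hg
  | smul c _ _ hf => exact hf.const_smul c

lemma integral_slice_le_of_le_integral_slice [SFinite μ] [SFinite ν] {f : α × β → ℝ}
    (hf : Integrable f (μ.prod ν)) (hf_nonneg : ∀ p, 0 ≤ f p) {C : ℝ}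
    (hC : ∀ x y, f (x, y) ≤ C * ∫ w, f (w, y) ∂μ) (x : α) :
    ∫ y, f (x, y) ∂ν ≤ C * ∫ p, f p ∂(μ.prod ν) :=
  calc ∫ y, f (x, y) ∂ν ≤ ∫ y, C * ∫ w, f (w, y) ∂μ ∂ν :=
        integral_mono_of_nonneg (.of_forall fun y => hf_nonneg (x, y))
          (hf.integral_prod_right.const_mul C) (.of_forall (hC x))
    _ = C * ∫ p, f p ∂(μ.prod ν) := by rw [integral_const_mul, integral_prod_symm f hf]

theorem tensor_product_norm_connection_general
    (F H : Submodule ℝ (ℝ → ℝ))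
    (hF_L2 : ∀ u ∈ F, MemLp u 2 (volume : Measure ℝ))
    (hH_L2 : ∀ v ∈ H, MemLp v 2 (volume : Measure ℝ))
    (A₂ : Set ℝ)
    (hH_supp : ∀ v ∈ H, ∀ y ∉ A₂, v y = 0)
    (Φ₁ Φ₂ : ℝ) (hΦ₁ : 0 < Φ₁) (hΦ₂ : 0 < Φ₂)
    (hF_norm : ∀ u ∈ F, ∀ x : ℝ, u x ^ 2 ≤ Φ₁ * ∫ z, u z ^ 2)
    (hH_norm : ∀ v ∈ H, ∀ y ∈ A₂, v y ^ 2 ≤ Φ₂ * ∫ z, v z ^ 2)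
    (t : ℝ × ℝ → ℝ)
    (ht : t ∈ Submodule.span ℝ
      {g : ℝ × ℝ → ℝ | ∃ u ∈ F, ∃ v ∈ H, g = fun p => u p.1 * v p.2}) :
    ∀ p : ℝ × ℝ, t p ^ 2 ≤ Φ₁ * Φ₂ * ∫ q, t q ^ 2 ∂(volume : Measure (ℝ × ℝ)) := by
  change t ∈ productSpan F H at ht
  rintro ⟨x, y⟩
  rw [Measure.volume_eq_prod]
  by_cases hy : y ∈ A₂
  · have h_sq_int : Integrable (fun q => t q ^ 2) (volume.prod volume) :=
      (memLp_two_of_mem_productSpan hF_L2 hH_L2 ht).integrable_sq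
    have h_slice : ∫ z, t (x, z) ^ 2 ≤ Φ₁ * ∫ q, t q ^ 2 ∂(volume.prod volume) :=
      integral_slice_le_of_le_integral_slice h_sq_int (fun q => sq_nonneg _)
        (fun w z => hF_norm _ (productSpan_slice_mem_left ht z) w) x
    calc t (x, y) ^ 2 ≤ Φ₂ * ∫ z, t (x, z) ^ 2 :=
          hH_norm _ (productSpan_slice_mem_right ht x) y hy
      _ ≤ Φ₂ * (Φ₁ * ∫ q, t q ^ 2 ∂(volume.prod volume)) := by gcongr
      _ = Φ₁ * Φ₂ * ∫ q, t q ^ 2 ∂(volume.prod volume) := by ring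
  · have h_int_nonneg : 0 ≤ ∫ q, t q ^ 2 ∂(volume.prod volume) :=
      integral_nonneg fun q => sq_nonneg _
    rw [hH_supp _ (productSpan_slice_mem_right ht x) y hy, zero_pow two_ne_zero]
    positivity

/-- Assumption M2 for tensor products.  If `‖u‖_∞² ≤ Φ₁ ∫ u²` on `F`
and `sup_{A₂} |v|² ≤ Φ₂ ∫ v²` on `H` (whose elements vanish outside `A₂`), then every
`t` in the span of the products `(x,y) ↦ u(x)v(y)` satisfies
`‖t‖_∞² ≤ Φ₁ Φ₂ ∫∫ t²`. -/
theorem tensor_product_norm_connection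
    (F H : Submodule ℝ (ℝ → ℝ))
    [FiniteDimensional ℝ F] [FiniteDimensional ℝ H]
    (hF_L2 : ∀ u ∈ F, MemLp u 2 (volume : Measure ℝ))
    (hH_L2 : ∀ v ∈ H, MemLp v 2 (volume : Measure ℝ))
    (hF_bdd : ∀ u ∈ F, ∃ C, ∀ x, |u x| ≤ C)
    (hH_bdd : ∀ v ∈ H, ∃ C, ∀ y, |v y| ≤ C)
    (A₂ : Set ℝ) (hA₂ : MeasurableSet A₂)
    (hH_supp : ∀ v ∈ H, ∀ y ∉ A₂, v y = 0)
    (Φ₁ Φ₂ : ℝ) (hΦ₁ : 0 < Φ₁) (hΦ₂ : 0 < Φ₂)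
    (hF_norm : ∀ u ∈ F, ∀ x : ℝ, u x ^ 2 ≤ Φ₁ * ∫ z, u z ^ 2)
    (hH_norm : ∀ v ∈ H, ∀ y ∈ A₂, v y ^ 2 ≤ Φ₂ * ∫ z, v z ^ 2)
    (t : ℝ × ℝ → ℝ)
    (ht : t ∈ Submodule.span ℝ
      {g : ℝ × ℝ → ℝ | ∃ u ∈ F, ∃ v ∈ H, g = fun p => u p.1 * v p.2}) :
    ∀ p : ℝ × ℝ, t p ^ 2 ≤ Φ₁ * Φ₂ * ∫ q, t q ^ 2 ∂(volume : Measure (ℝ × ℝ)) :=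
  tensor_product_norm_connection_general F H hF_L2 hH_L2 A₂ hH_supp Φ₁ Φ₂ hΦ₁ hΦ₂ hF_norm hH_norm t
    ht
end

section
/- Let α₁, α₂ > 0 satisfy α₁ − 2α₂ + 2α₁α₂ > 0 and α₂ − 2α₁ + 2α₁α₂ > 0, and let ᾱ = 2α₁α₂/(α₁+α₂) be the harmonic mean of α₁ and α₂. Then there exists a constant C > 0 such that for every integer n ≥ 1 there exist positive integers D₁ and D₂ with D₁ ≤ n^{1/3}, D₂ ≤ n^{1/3}, and D₁^{−2α₁} + D₂^{−2α₂} + D₁D₂/n ≤ C · n^{−2ᾱ/(2ᾱ+2)}. -/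
open MeasureTheory

/-- bias–variance trade-off of Corollary 1.  Under the conditions
`α₁ − 2α₂ + 2α₁α₂ > 0` and `α₂ − 2α₁ + 2α₁α₂ > 0`, dimensions `D₁, D₂ ≤ n^{1/3}` can
be chosen so that `D₁^{−2α₁} + D₂^{−2α₂} + D₁D₂/n ≲ n^{−2ᾱ/(2ᾱ+2)}`, with `ᾱ` the
harmonic mean of `α₁` and `α₂`. -/
theorem bias_variance_tradeoff_rate
    (α₁ α₂ : ℝ) (h₁ : 0 < α₁) (h₂ : 0 < α₂)
    (hc₁ : 0 < α₁ - 2 * α₂ + 2 * α₁ * α₂)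
    (hc₂ : 0 < α₂ - 2 * α₁ + 2 * α₁ * α₂)
    (abar : ℝ) (habar : abar = 2 * α₁ * α₂ / (α₁ + α₂)) :
    ∃ C : ℝ, 0 < C ∧ ∀ n : ℕ, 1 ≤ n → ∃ D₁ D₂ : ℕ, 0 < D₁ ∧ 0 < D₂ ∧
      (D₁ : ℝ) ≤ (n : ℝ) ^ ((1 : ℝ) / 3) ∧ (D₂ : ℝ) ≤ (n : ℝ) ^ ((1 : ℝ) / 3) ∧
      (D₁ : ℝ) ^ (-(2 * α₁)) + (D₂ : ℝ) ^ (-(2 * α₂)) + (D₁ : ℝ) * (D₂ : ℝ) / (n : ℝ)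
        ≤ C * (n : ℝ) ^ (-(2 * abar) / (2 * abar + 2)) := by
  set S : ℝ := α₁ + α₂ + 2 * α₁ * α₂ with hS
  have hSpos : 0 < S := by positivity
  set β₁ : ℝ := α₂ / S with hβ₁
  set β₂ : ℝ := α₁ / S with hβ₂
  set r : ℝ := 2 * α₁ * α₂ / S with hr
  have hrpos : 0 < r := by positivity
  -- exponent identity
  have hexp : -(2 * abar) / (2 * abar + 2) = -r := by
    have h12 : α₁ + α₂ ≠ 0 := by positivity
    have habar_pos : 0 < abar := by rw [habar]; positivity
    rw [habar, hr]
    field_simp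
    ring
  have hβ₁3 : β₁ ≤ 1 / 3 := by
    rw [hβ₁, div_le_div_iff₀ hSpos (by norm_num)]
    nlinarith
  have hβ₂3 : β₂ ≤ 1 / 3 := by
    rw [hβ₂, div_le_div_iff₀ hSpos (by norm_num)]
    nlinarith
  refine ⟨2 ^ (2 * α₁) + 2 ^ (2 * α₂) + 1, by positivity, ?_⟩
  intro n hn
  have hn1 : (1 : ℝ) ≤ (n : ℝ) := by exact_mod_cast hn
  have hn0 : (0 : ℝ) < (n : ℝ) := by linarith
  set x₁ : ℝ := (n : ℝ) ^ β₁ with hx₁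
  set x₂ : ℝ := (n : ℝ) ^ β₂ with hx₂
  have hx₁1 : (1 : ℝ) ≤ x₁ := Real.one_le_rpow hn1 (by positivity)
  have hx₂1 : (1 : ℝ) ≤ x₂ := Real.one_le_rpow hn1 (by positivity)
  refine ⟨⌊x₁⌋₊, ⌊x₂⌋₊, ?_, ?_, ?_, ?_, ?_⟩
  · exact Nat.floor_pos.mpr hx₁1
  · exact Nat.floor_pos.mpr hx₂1
  · calc ((⌊x₁⌋₊ : ℝ)) ≤ x₁ := Nat.floor_le (by linarith)
      _ ≤ (n : ℝ) ^ ((1 : ℝ) / 3) := Real.rpow_le_rpow_of_exponent_le hn1 hβ₁3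
  · calc ((⌊x₂⌋₊ : ℝ)) ≤ x₂ := Nat.floor_le (by linarith)
      _ ≤ (n : ℝ) ^ ((1 : ℝ) / 3) := Real.rpow_le_rpow_of_exponent_le hn1 hβ₂3
  · -- main bound
    have half_le : ∀ x : ℝ, 1 ≤ x → x / 2 ≤ (⌊x⌋₊ : ℝ) := by
      intro x hx
      have h1 : (1 : ℝ) ≤ (⌊x⌋₊ : ℝ) := by exact_mod_cast Nat.floor_pos.mpr hx
      have h2 : x < (⌊x⌋₊ : ℝ) + 1 := Nat.lt_floor_add_one x
      linarith
    have hfl₁ : x₁ / 2 ≤ (⌊x₁⌋₊ : ℝ) := half_le x₁ hx₁1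
    have hfl₂ : x₂ / 2 ≤ (⌊x₂⌋₊ : ℝ) := half_le x₂ hx₂1
    have hx₁pos : (0 : ℝ) < x₁ := by linarith
    have hx₂pos : (0 : ℝ) < x₂ := by linarith
    have key : ∀ (a : ℝ) (x : ℝ) (ha : 0 < a) (hx : 1 ≤ x)
        (hfl : x / 2 ≤ (⌊x⌋₊ : ℝ)),
        ((⌊x⌋₊ : ℝ)) ^ (-(2 * a)) ≤ 2 ^ (2 * a) * x ^ (-(2 * a)) := by
      intro a x ha hx hfl
      have hxpos : (0 : ℝ) < x := by linarith
      have hmono := Real.rpow_le_rpow_of_nonpos (by positivity : (0:ℝ) < x / 2) hfl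
        (by linarith : -(2 * a) ≤ 0)
      refine hmono.trans_eq ?_
      rw [Real.div_rpow hxpos.le (by norm_num), Real.rpow_neg (by norm_num : (0:ℝ) ≤ 2),
        div_inv_eq_mul, mul_comm]
    have hb₁ : ((⌊x₁⌋₊ : ℝ)) ^ (-(2 * α₁)) ≤ 2 ^ (2 * α₁) * (n : ℝ) ^ (-r) := by
      refine (key α₁ x₁ h₁ hx₁1 hfl₁).trans_eq ?_
      rw [hx₁, ← Real.rpow_mul hn0.le]
      congr 1
      rw [hβ₁, hr]; field_simp
    have hb₂ : ((⌊x₂⌋₊ : ℝ)) ^ (-(2 * α₂)) ≤ 2 ^ (2 * α₂) * (n : ℝ) ^ (-r) := by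
      refine (key α₂ x₂ h₂ hx₂1 hfl₂).trans_eq ?_
      rw [hx₂, ← Real.rpow_mul hn0.le]
      congr 1
      rw [hβ₂, hr]; field_simp
    have hv : ((⌊x₁⌋₊ : ℝ)) * (⌊x₂⌋₊ : ℝ) / (n : ℝ) ≤ (n : ℝ) ^ (-r) := by
      have hle : ((⌊x₁⌋₊ : ℝ)) * (⌊x₂⌋₊ : ℝ) / (n : ℝ) ≤ x₁ * x₂ / (n : ℝ) := by
        gcongr
        · exact Nat.floor_le hx₁pos.le
        · exact Nat.floor_le hx₂pos.le
      refine hle.trans_eq ?_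
      rw [hx₁, hx₂, div_eq_mul_inv, ← Real.rpow_neg_one (n : ℝ),
        ← Real.rpow_add hn0, ← Real.rpow_add hn0]
      congr 1
      rw [hβ₁, hβ₂, hr]; field_simp; ring
    rw [hexp]
    nlinarith [Real.rpow_pos_of_pos hn0 (-r), hb₁, hb₂, hv]
end

section
/- Let ψ : ℝ → ℝ be a bounded measurable function with compact support, ∫ ψ = 0 and ∫ ψ² = 1. Let B ⊂ ℝ be a compact set of positive Lebesgue measure, c₀ = |B|^{−1}, and A ⊆ B × B. Let j₁, j₂ be nonnegative integers and R a finite subset of ℤ² such that the functions ψ_{JK}(x,y) = 2^{(j₁+j₂)/2} ψ(2^{j₁}x − k₁) ψ(2^{j₂}y − k₂), K = (k₁,k₂) ∈ R, have pairwise disjoint supports, all contained in A. For n ≥ 1 and ε ∈ {−1,1}^R define π_ε(x,y) = c₀ 1_B(y) + n^{−1/2} Σ_{K∈R} ε_K ψ_{JK}(x,y). If (2^{j₁+j₂}/n)^{1/2} ≤ c₀/(2‖ψ‖_∞²), then: (i) ∫_ℝ π_ε(x,y) dy = 1 for every x ∈ ℝ; (ii) π_ε(x,y) ≥ (c₀/2)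 1_B(y) ≥ 0 for all x, y; (iii) ∫_ℝ c₀ 1_B(x) π_ε(x,y) dx = c₀ 1_B(y) for every y ∈ ℝ. -/
open MeasureTheory Function

/-!
The sections `x ↦ ψ_{JK}(x, y)` and `y ↦ ψ_{JK}(x, y)` are multiples of dilated translates of
`ψ`, hence have zero integral: the perturbation changes neither the row integrals of `π_ε` nor
the `c₀ 1_B`-marginal. Since the supports of the `ψ_{JK}` are disjoint, at each point the
perturbation is a single term, of size at most `n^{-1/2} 2^{(j₁+j₂)/2} ‖ψ‖_∞² ≤ c₀/2`, and it
vanishes off `A ⊆ B × B`, where `c₀ 1_B(y) = c₀`.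
-/

lemma Finset.abs_sum_mul_le_of_pairwiseDisjoint_support {ι β : Type*} {R : Finset ι}
    {f : ι → β → ℝ} {c : ι → ℝ} {K : ℝ} {p : β}
    (hdisj : (R : Set ι).PairwiseDisjoint fun k => support (f k))
    (hc : ∀ k ∈ R, |c k| ≤ 1) (hf : ∀ k ∈ R, |f k p| ≤ K) (hK : 0 ≤ K) :
    |∑ k ∈ R, c k * f k p| ≤ K := by
  by_cases h : ∀ k ∈ R, f k p = 0
  · rw [Finset.sum_eq_zero fun k hk => by rw [h k hk, mul_zero], abs_zero]
    exact hK
  · obtain ⟨k₀, hk₀, hp⟩ : ∃ k ∈ R, f k p ≠ 0 := by simpa using h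
    have hsingle : ∑ k ∈ R, c k * f k p = c k₀ * f k₀ p :=
      Finset.sum_eq_single_of_mem k₀ hk₀ fun k hk hne => by
        rw [notMem_support.1 fun hk' => Set.disjoint_left.1 (hdisj hk hk₀ hne) hk' hp, mul_zero]
    rw [hsingle, abs_mul]
    exact (mul_le_mul (hc k₀ hk₀) (hf k₀ hk₀) (abs_nonneg _) zero_le_one).trans_eq (one_mul K)

section TensorWavelet

variable {ψ : ℝ → ℝ}

lemma integrable_comp_mul_sub (hψ : Integrable ψ) {a : ℝ} (ha : a ≠ 0) (b : ℝ) :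
    Integrable (fun x => ψ (a * x - b)) :=
  (hψ.comp_sub_right b).comp_mul_left' ha

lemma integral_comp_mul_sub_eq_zero (hψ : ∫ x, ψ x = 0) (a b : ℝ) : ∫ x, ψ (a * x - b) = 0 := by
  rw [Measure.integral_comp_mul_left (fun t => ψ (t - b)) a, integral_sub_right_eq_self, hψ,
    smul_zero]

noncomputable def tensorWavelet (ψ : ℝ → ℝ) (j₁ j₂ : ℕ) (k : ℤ × ℤ) (p : ℝ × ℝ) : ℝ :=
  (2 : ℝ) ^ (((j₁ : ℝ) + (j₂ : ℝ)) / 2)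
    * ψ ((2 : ℝ) ^ j₁ * p.1 - (k.1 : ℝ)) * ψ ((2 : ℝ) ^ j₂ * p.2 - (k.2 : ℝ))

variable (j₁ j₂ : ℕ) (k : ℤ × ℤ)

lemma integrable_tensorWavelet_snd (hψ : Integrable ψ) (x : ℝ) :
    Integrable (fun y => tensorWavelet ψ j₁ j₂ k (x, y)) := by
  simp only [tensorWavelet]
  exact (integrable_comp_mul_sub hψ (pow_ne_zero _ two_ne_zero) _).const_mul _

lemma integrable_tensorWavelet_fst (hψ : Integrable ψ) (y : ℝ) :
    Integrable (fun x => tensorWavelet ψ j₁ j₂ k (x, y)) := by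
  simp only [tensorWavelet]
  exact ((integrable_comp_mul_sub hψ (pow_ne_zero _ two_ne_zero) _).const_mul _).mul_const _

lemma integral_tensorWavelet_snd (hψ : ∫ x, ψ x = 0) (x : ℝ) :
    ∫ y, tensorWavelet ψ j₁ j₂ k (x, y) = 0 := by
  simp only [tensorWavelet]
  rw [integral_const_mul, integral_comp_mul_sub_eq_zero hψ, mul_zero]

lemma integral_tensorWavelet_fst (hψ : ∫ x, ψ x = 0) (y : ℝ) :
    ∫ x, tensorWavelet ψ j₁ j₂ k (x, y) = 0 := by
  simp only [tensorWavelet]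
  rw [integral_mul_const, integral_const_mul, integral_comp_mul_sub_eq_zero hψ, mul_zero,
    zero_mul]

lemma abs_tensorWavelet_le {M : ℝ} (hM : ∀ x, |ψ x| ≤ M) (p : ℝ × ℝ) :
    |tensorWavelet ψ j₁ j₂ k p| ≤ (2 : ℝ) ^ (((j₁ : ℝ) + (j₂ : ℝ)) / 2) * M ^ 2 := by
  have hM₀ : 0 ≤ M := (abs_nonneg _).trans (hM 0)
  rw [tensorWavelet, abs_mul, abs_mul, abs_of_pos (by positivity), mul_assoc, sq]
  exact mul_le_mul_of_nonneg_left (mul_le_mul (hM _) (hM _) (abs_nonneg _) hM₀) (by positivity)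

lemma abs_sum_mul_tensorWavelet_le {M : ℝ} (hM : ∀ x, |ψ x| ≤ M) {R : Finset (ℤ × ℤ)}
    (hdisj : (R : Set (ℤ × ℤ)).PairwiseDisjoint fun k => support (tensorWavelet ψ j₁ j₂ k))
    {ε : ℤ × ℤ → ℝ} (hε : ∀ k ∈ R, ε k = 1 ∨ ε k = -1) (p : ℝ × ℝ) :
    |∑ k ∈ R, ε k * tensorWavelet ψ j₁ j₂ k p| ≤ (2 : ℝ) ^ (((j₁ : ℝ) + (j₂ : ℝ)) / 2) * M ^ 2 :=
  have hM₀ : 0 ≤ M := (abs_nonneg _).trans (hM 0)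
  Finset.abs_sum_mul_le_of_pairwiseDisjoint_support hdisj
    (fun k hk => by rcases hε k hk with h | h <;> simp [h])
    (fun k _ => abs_tensorWavelet_le j₁ j₂ k hM p) (by positivity)

end TensorWavelet

lemma integrable_and_integral_const_mul_sum_mul_eq_zero {ι α : Type*} [MeasurableSpace α]
    {μ : Measure α} {R : Finset ι} {f : ι → α → ℝ} (hf : ∀ k ∈ R, Integrable (f k) μ)
    (hf₀ : ∀ k ∈ R, ∫ x, f k x ∂μ = 0) (s : ℝ) (c : ι → ℝ) :
    Integrable (fun x => s * ∑ k ∈ R, c k * f k x) μ ∧ ∫ x, s * ∑ k ∈ R, c k * f k x ∂μ = 0 := by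
  have hterm : ∀ k ∈ R, Integrable (fun x => c k * f k x) μ := fun k hk => (hf k hk).const_mul _
  refine ⟨(integrable_finsetSum R hterm).const_mul s, ?_⟩
  rw [integral_const_mul, integral_finsetSum R hterm,
    Finset.sum_eq_zero fun k hk => by rw [integral_const_mul, hf₀ k hk, mul_zero], mul_zero]

lemma half_le_const_mul_indicator_one_add {α : Type*} {B : Set α} {c₀ : ℝ} {g : α × α → ℝ}
    (hg_supp : support g ⊆ B ×ˢ B) (hg_le : ∀ p, |g p| ≤ c₀ / 2) (x y : α) :
    c₀ / 2 * B.indicator (fun _ => (1 : ℝ)) y ≤ c₀ * B.indicator (fun _ => (1 : ℝ)) y + g (x, y)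
      ∧ 0 ≤ c₀ * B.indicator (fun _ => (1 : ℝ)) y + g (x, y) := by
  by_cases hy : y ∈ B
  · have := abs_le.1 (hg_le (x, y))
    rw [Set.indicator_of_mem hy]
    constructor <;> linarith
  · rw [Set.indicator_of_notMem hy, notMem_support.1 fun h => hy (hg_supp h).2]
    simp

section UniformPerturbation

variable {α : Type*} [MeasurableSpace α] {μ : Measure α} {B : Set α} {c₀ : ℝ}

lemma integrable_and_integral_const_mul_indicator_one (hB : MeasurableSet B)
    (hc₀ : c₀ * μ.real B = 1) :
    Integrable (fun x => c₀ * B.indicator (fun _ => (1 : ℝ)) x) μ ∧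
      ∫ x, c₀ * B.indicator (fun _ => (1 : ℝ)) x ∂μ = 1 := by
  have hμB : μ B ≠ ⊤ := fun h => by simp [Measure.real, h] at hc₀
  refine ⟨((integrable_indicator_iff hB).2 (integrableOn_const hμB)).const_mul c₀, ?_⟩
  rw [integral_const_mul, integral_indicator_const _ hB, smul_eq_mul, mul_one, hc₀]

variable {g : α × α → ℝ}

lemma integral_const_mul_indicator_one_add_eq_one (hB : MeasurableSet B)
    (hc₀ : c₀ * μ.real B = 1) (x : α) (hg_int : Integrable (fun y => g (x, y)) μ)
    (hg : ∫ y, g (x, y) ∂μ = 0) :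
    ∫ y, c₀ * B.indicator (fun _ => (1 : ℝ)) y + g (x, y) ∂μ = 1 := by
  obtain ⟨hind_int, hind⟩ := integrable_and_integral_const_mul_indicator_one (μ := μ) hB hc₀
  rw [integral_add hind_int hg_int, hind, hg, add_zero]

lemma integral_const_mul_indicator_one_mul_add_eq (hB : MeasurableSet B)
    (hc₀ : c₀ * μ.real B = 1) (hg_supp : support g ⊆ B ×ˢ B) (y : α)
    (hg_int : Integrable (fun x => g (x, y)) μ) (hg : ∫ x, g (x, y) ∂μ = 0) :
    ∫ x, c₀ * B.indicator (fun _ => (1 : ℝ)) x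
        * (c₀ * B.indicator (fun _ => (1 : ℝ)) y + g (x, y)) ∂μ
      = c₀ * B.indicator (fun _ => (1 : ℝ)) y := by
  obtain ⟨hind_int, hind⟩ := integrable_and_integral_const_mul_indicator_one (μ := μ) hB hc₀
  have hind_mul : ∀ x, B.indicator (fun _ => (1 : ℝ)) x * g (x, y) = g (x, y) := fun x => by
    by_cases hx : x ∈ B
    · rw [Set.indicator_of_mem hx, one_mul]
    · rw [notMem_support.1 fun h => hx (hg_supp h).1, mul_zero]
  have hsplit : (fun x => c₀ * B.indicator (fun _ => (1 : ℝ)) x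
      * (c₀ * B.indicator (fun _ => (1 : ℝ)) y + g (x, y))) = fun x =>
      c₀ * B.indicator (fun _ => (1 : ℝ)) y * (c₀ * B.indicator (fun _ => (1 : ℝ)) x)
        + c₀ * g (x, y) := by
    funext x
    linear_combination c₀ * hind_mul x
  rw [hsplit, integral_add (hind_int.const_mul _) (hg_int.const_mul _), integral_const_mul, hind,
    integral_const_mul, hg, mul_one, mul_zero, add_zero]

end UniformPerturbation

lemma rpow_neg_half_mul_two_rpow_half {n : ℝ} (hn : 0 ≤ n) (t : ℝ) :
    n ^ (-(1 : ℝ) / 2) * (2 : ℝ) ^ (t / 2) = √((2 : ℝ) ^ t / n) := by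
  rw [Real.sqrt_div' _ hn, Real.sqrt_eq_rpow, Real.sqrt_eq_rpow, ← Real.rpow_mul zero_le_two,
    neg_div, Real.rpow_neg hn]
  ring_nf

lemma rpow_neg_half_mul_two_rpow_half_mul_sq_le {n c M t : ℝ} (hn : 0 ≤ n) (hc : 0 ≤ c)
    (hcond : √((2 : ℝ) ^ t / n) ≤ c / (2 * M ^ 2)) :
    n ^ (-(1 : ℝ) / 2) * ((2 : ℝ) ^ (t / 2) * M ^ 2) ≤ c / 2 := by
  rw [← mul_assoc, rpow_neg_half_mul_two_rpow_half hn]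
  rcases (sq_nonneg M).eq_or_lt with hM | hM
  · rw [← hM, mul_zero]
    positivity
  · have := (le_div_iff₀ (by positivity)).1 hcond
    linarith

theorem perturbed_transition_density_properties_general
    (ψ : ℝ → ℝ) (hψ_meas : Measurable ψ) (hψ_supp : HasCompactSupport ψ)
    (M : ℝ) (hM : ∀ x, |ψ x| ≤ M)
    (hψ_int : ∫ x, ψ x = 0)
    (B : Set ℝ) (hB_cpt : IsCompact B) (hB_pos : 0 < (volume B).toReal)
    (c₀ : ℝ) (hc₀ : c₀ = ((volume B).toReal)⁻¹)
    (A : Set (ℝ × ℝ)) (hAB : A ⊆ B ×ˢ B)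
    (j₁ j₂ : ℕ) (R : Finset (ℤ × ℤ))
    (ψJ : ℤ × ℤ → ℝ × ℝ → ℝ)
    (hψJ : ∀ k : ℤ × ℤ, ψJ k = fun p =>
      (2 : ℝ) ^ (((j₁ : ℝ) + (j₂ : ℝ)) / 2)
        * ψ ((2 : ℝ) ^ j₁ * p.1 - (k.1 : ℝ)) * ψ ((2 : ℝ) ^ j₂ * p.2 - (k.2 : ℝ)))
    (hsupp : ∀ k ∈ R, Function.support (ψJ k) ⊆ A)
    (hdisj : ∀ k ∈ R, ∀ k' ∈ R, k ≠ k' →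
      Disjoint (Function.support (ψJ k)) (Function.support (ψJ k')))
    (n : ℕ)
    (ε : ℤ × ℤ → ℝ) (hε : ∀ k ∈ R, ε k = 1 ∨ ε k = -1)
    (πe : ℝ × ℝ → ℝ)
    (hπe : πe = fun p => c₀ * B.indicator (fun _ => (1 : ℝ)) p.2
      + (n : ℝ) ^ (-(1 : ℝ) / 2) * ∑ k ∈ R, ε k * ψJ k p)
    (hcond : Real.sqrt ((2 : ℝ) ^ ((j₁ : ℝ) + (j₂ : ℝ)) / (n : ℝ)) ≤ c₀ / (2 * M ^ 2)) :
    (∀ x : ℝ, ∫ y, πe (x, y) = 1)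
    ∧ (∀ x y : ℝ, c₀ / 2 * B.indicator (fun _ => (1 : ℝ)) y ≤ πe (x, y)
        ∧ 0 ≤ πe (x, y))
    ∧ (∀ y : ℝ, ∫ x, c₀ * B.indicator (fun _ => (1 : ℝ)) x * πe (x, y)
        = c₀ * B.indicator (fun _ => (1 : ℝ)) y) := by
  obtain rfl : ψJ = tensorWavelet ψ j₁ j₂ := funext hψJ
  subst hπe
  have hB := hB_cpt.measurableSet
  have hψ : Integrable ψ :=
    memLp_one_iff_integrable.1 <|
      hψ_supp.memLp_of_bound hψ_meas.aestronglyMeasurable M (ae_of_all _ hM)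
  have hc₀B : c₀ * volume.real B = 1 := hc₀ ▸ inv_mul_cancel₀ hB_pos.ne'
  have hc₀_pos : 0 < c₀ := hc₀ ▸ inv_pos.2 hB_pos
  set s := (n : ℝ) ^ (-(1 : ℝ) / 2)
  set g : ℝ × ℝ → ℝ := fun p => s * ∑ k ∈ R, ε k * tensorWavelet ψ j₁ j₂ k p
  have hg_supp : support g ⊆ B ×ˢ B :=
    (support_mul_subset_right _ _).trans <| (Finset.support_sum _ _).trans <|
      Set.iUnion₂_subset fun k hk => (support_mul_subset_right _ _).trans ((hsupp k hk).trans hAB)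
  have hg_le : ∀ p, |g p| ≤ c₀ / 2 := fun p => by
    change |s * _| ≤ _
    rw [abs_mul, abs_of_nonneg (by positivity)]
    exact (mul_le_mul_of_nonneg_left (abs_sum_mul_tensorWavelet_le j₁ j₂ hM
      (fun k hk k' hk' hne => hdisj k hk k' hk' hne) hε p) (by positivity)).trans
      (rpow_neg_half_mul_two_rpow_half_mul_sq_le n.cast_nonneg hc₀_pos.le hcond)
  refine ⟨fun x => ?_, half_le_const_mul_indicator_one_add hg_supp hg_le, fun y => ?_⟩
  · obtain ⟨hint, hzero⟩ := integrable_and_integral_const_mul_sum_mul_eq_zero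
      (fun k _ => integrable_tensorWavelet_snd j₁ j₂ k hψ x)
      (fun k _ => integral_tensorWavelet_snd j₁ j₂ k hψ_int x) s ε
    exact integral_const_mul_indicator_one_add_eq_one (g := g) hB hc₀B x hint hzero
  · obtain ⟨hint, hzero⟩ := integrable_and_integral_const_mul_sum_mul_eq_zero
      (fun k _ => integrable_tensorWavelet_fst j₁ j₂ k hψ y)
      (fun k _ => integral_tensorWavelet_fst j₁ j₂ k hψ_int y) s ε
    exact integral_const_mul_indicator_one_mul_add_eq (g := g) hB hc₀B hg_supp y hint hzero

/-- construction of perturbed transition densities in the lower-bound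
proof.  Under the smallness condition `√(2^{j₁+j₂}/n) ≤ c₀/(2‖ψ‖_∞²)`, each perturbed
function `π_ε(x,y) = c₀1_B(y) + n^{−1/2} Σ_K ε_K ψ_{JK}(x,y)` is a transition density
bounded below by `(c₀/2)1_B(y)`, with stationary density `c₀1_B`. -/
theorem perturbed_transition_density_properties
    (ψ : ℝ → ℝ) (hψ_meas : Measurable ψ) (hψ_supp : HasCompactSupport ψ)
    (M : ℝ) (hM : ∀ x, |ψ x| ≤ M)
    (hψ_int : ∫ x, ψ x = 0) (hψ_sq : ∫ x, ψ x ^ 2 = 1)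
    (B : Set ℝ) (hB_cpt : IsCompact B) (hB_pos : 0 < (volume B).toReal)
    (c₀ : ℝ) (hc₀ : c₀ = ((volume B).toReal)⁻¹)
    (A : Set (ℝ × ℝ)) (hAB : A ⊆ B ×ˢ B)
    (j₁ j₂ : ℕ) (R : Finset (ℤ × ℤ))
    (ψJ : ℤ × ℤ → ℝ × ℝ → ℝ)
    (hψJ : ∀ k : ℤ × ℤ, ψJ k = fun p =>
      (2 : ℝ) ^ (((j₁ : ℝ) + (j₂ : ℝ)) / 2)
        * ψ ((2 : ℝ) ^ j₁ * p.1 - (k.1 : ℝ)) * ψ ((2 : ℝ) ^ j₂ * p.2 - (k.2 : ℝ)))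
    (hsupp : ∀ k ∈ R, Function.support (ψJ k) ⊆ A)
    (hdisj : ∀ k ∈ R, ∀ k' ∈ R, k ≠ k' →
      Disjoint (Function.support (ψJ k)) (Function.support (ψJ k')))
    (n : ℕ) (hn : 1 ≤ n)
    (ε : ℤ × ℤ → ℝ) (hε : ∀ k ∈ R, ε k = 1 ∨ ε k = -1)
    (πe : ℝ × ℝ → ℝ)
    (hπe : πe = fun p => c₀ * B.indicator (fun _ => (1 : ℝ)) p.2
      + (n : ℝ) ^ (-(1 : ℝ) / 2) * ∑ k ∈ R, ε k * ψJ k p)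
    (hcond : Real.sqrt ((2 : ℝ) ^ ((j₁ : ℝ) + (j₂ : ℝ)) / (n : ℝ)) ≤ c₀ / (2 * M ^ 2)) :
    (∀ x : ℝ, ∫ y, πe (x, y) = 1)
    ∧ (∀ x y : ℝ, c₀ / 2 * B.indicator (fun _ => (1 : ℝ)) y ≤ πe (x, y)
        ∧ 0 ≤ πe (x, y))
    ∧ (∀ y : ℝ, ∫ x, c₀ * B.indicator (fun _ => (1 : ℝ)) x * πe (x, y)
        = c₀ * B.indicator (fun _ => (1 : ℝ)) y) :=
  perturbed_transition_density_properties_general ψ hψ_meas hψ_supp M hM hψ_int B hB_cpt hB_pos c₀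
    hc₀ A hAB j₁ j₂ R ψJ hψJ hsupp hdisj n ε hε πe hπe hcond
end

section
/- Let D ≥ 1 and let (φ_j)_{1≤j≤D} be an orthonormal family of bounded functions in L²(ℝ) such that every u in the span of (φ_j) satisfies ‖u‖_∞² ≤ φ₁ D ∫ u² for some constant φ₁ > 0. Define the symmetric matrices B_{j,l} = ‖φ_j φ_l‖_∞ and V_{j,l} = (∫ (φ_j φ_l)²)^{1/2}, and for a symmetric matrix A with nonnegative entries set ρ̄(A) = sup { Σ_{j,l} |a_j| |a_l| A_{j,l} : Σ_j a_j² = 1 }. Then max{ ρ̄(V)², ρ̄(B) } ≤ φ₁ D². -/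
open MeasureTheory

/-- lemma of Baraud, Comte and Viennet.  For an orthonormal family
`(φ_j)_{j≤D}` of bounded functions whose span satisfies the norm connection
`‖u‖_∞² ≤ φ₁ D ∫ u²`, the quantities `ρ̄(V)²` and `ρ̄(B)` built from
`B_{j,l} = ‖φ_jφ_l‖_∞` and `V_{j,l} = ‖φ_jφ_l‖₂` are bounded by `φ₁ D²`. -/
theorem baraud_comte_viennet_Lphi_bound
    (D : ℕ) (hD : 1 ≤ D) (φ : Fin D → ℝ → ℝ)
    (hφ_meas : ∀ j, Measurable (φ j))
    (hφ_bdd : ∀ j, ∃ C, ∀ x, |φ j x| ≤ C)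
    (hφ_on : ∀ j l, ∫ x, φ j x * φ l x = if j = l then 1 else 0)
    (φ₁ : ℝ) (hφ₁ : 0 < φ₁)
    (hnorm : ∀ a : Fin D → ℝ, ∀ x : ℝ,
      (∑ j, a j * φ j x) ^ 2 ≤ φ₁ * D * ∫ z, (∑ j, a j * φ j z) ^ 2)
    (Bm Vm : Fin D → Fin D → ℝ)
    (hBm : ∀ j l, Bm j l = ⨆ x : ℝ, |φ j x * φ l x|)
    (hVm : ∀ j l, Vm j l = Real.sqrt (∫ x, (φ j x * φ l x) ^ 2))
    (ρ : (Fin D → Fin D → ℝ) → ℝ)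
    (hρ : ∀ M : Fin D → Fin D → ℝ,
      ρ M = sSup ((fun a : Fin D → ℝ => ∑ j, ∑ l, |a j| * |a l| * M j l) ''
        {a : Fin D → ℝ | ∑ j, a j ^ 2 = 1})) :
    ρ Vm ^ 2 ≤ φ₁ * (D : ℝ) ^ 2 ∧ ρ Bm ≤ φ₁ * (D : ℝ) ^ 2 := by
  classical
  have hD0 : (0:ℝ) < D := by exact_mod_cast hD
  -- integrability of φ j * φ j
  have hsq_int : ∀ j, Integrable (fun x => φ j x * φ j x) := by
    intro j
    by_contra h
    have h1 := hφ_on j j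
    rw [integral_undef h] at h1
    simp at h1
  have hmeas2 : ∀ j l, AEStronglyMeasurable (fun x => φ j x * φ l x) (volume : Measure ℝ) :=
    fun j l => ((hφ_meas j).mul (hφ_meas l)).aestronglyMeasurable
  have hint : ∀ j l, Integrable (fun x => φ j x * φ l x) := by
    intro j l
    refine Integrable.mono' (((hsq_int j).add (hsq_int l)).div_const 2) (hmeas2 j l) ?_
    filter_upwards with x
    simp only [Pi.add_apply, Real.norm_eq_abs]
    rw [abs_mul]
    nlinarith [sq_nonneg (|φ j x| - |φ l x|), sq_abs (φ j x), sq_abs (φ l x)]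
  have hint_sq : ∀ j l, Integrable (fun x => (φ j x * φ l x) ^ 2) := by
    intro j l
    obtain ⟨C, hC⟩ := hφ_bdd j
    refine Integrable.mono' ((hsq_int l).const_mul (C ^ 2)) ?_ ?_
    · exact (((hφ_meas j).mul (hφ_meas l)).pow_const 2).aestronglyMeasurable
    · filter_upwards with x
      have h1 := hC x
      rw [Real.norm_eq_abs, abs_pow, abs_mul]
      nlinarith [abs_nonneg (φ j x), abs_nonneg (φ l x), sq_abs (φ j x), sq_abs (φ l x),
        mul_le_mul_of_nonneg_right (mul_self_le_mul_self (abs_nonneg (φ j x)) h1)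
          (mul_self_nonneg (|φ l x|))]
  -- integral of the square of a linear combination
  have hInt_sq : ∀ a : Fin D → ℝ, (∫ z, (∑ j, a j * φ j z) ^ 2) = ∑ j, a j ^ 2 := by
    intro a
    have hexp : ∀ z, (∑ j, a j * φ j z) ^ 2
        = ∑ j, ∑ l, (a j * a l) * (φ j z * φ l z) := by
      intro z
      rw [sq, Finset.sum_mul_sum]
      exact Finset.sum_congr rfl fun j _ => Finset.sum_congr rfl fun l _ => by ring
    simp_rw [hexp]
    rw [integral_finset_sum _ (fun j _ => integrable_finset_sum _
      (fun l _ => (hint j l).const_mul _))]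
    have : ∀ j ∈ Finset.univ, (∫ z, ∑ l, (a j * a l) * (φ j z * φ l z)) = a j ^ 2 := by
      intro j _
      rw [integral_finset_sum _ (fun l _ => (hint j l).const_mul _)]
      have : ∀ l ∈ Finset.univ, (∫ z, (a j * a l) * (φ j z * φ l z))
          = (a j * a l) * (if j = l then 1 else 0) := by
        intro l _
        rw [integral_const_mul, hφ_on j l]
      rw [Finset.sum_congr rfl this]
      simp [mul_ite, Finset.sum_ite_eq, sq]
    rw [Finset.sum_congr rfl this]
  -- key pointwise bound: ∑ φ j x ^ 2 ≤ φ₁ D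
  have key : ∀ x, (∑ j, φ j x ^ 2) ≤ φ₁ * D := by
    intro x
    have h := hnorm (fun j => φ j x) x
    rw [hInt_sq] at h
    have hS : (∑ j, φ j x * φ j x) = ∑ j, φ j x ^ 2 := by
      exact Finset.sum_congr rfl fun j _ => (sq (φ j x)).symm
    rw [hS] at h
    have hS0 : (0:ℝ) ≤ ∑ j, φ j x ^ 2 := Finset.sum_nonneg fun _ _ => sq_nonneg _
    rcases eq_or_lt_of_le hS0 with h0 | h0
    · rw [← h0]; positivity
    · nlinarith
  have keyj : ∀ j x, φ j x ^ 2 ≤ φ₁ * D := by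
    intro j x
    calc φ j x ^ 2 ≤ ∑ i, φ i x ^ 2 :=
          Finset.single_le_sum (fun i _ => sq_nonneg (φ i x)) (Finset.mem_univ j)
      _ ≤ φ₁ * D := key x
  -- nonemptiness of the constraint set
  have hne : ({a : Fin D → ℝ | ∑ j, a j ^ 2 = 1}).Nonempty := by
    refine ⟨Pi.single ⟨0, hD⟩ 1, ?_⟩
    simp [Pi.single_apply, sq, ite_mul, Finset.sum_ite_eq']
  -- Cauchy–Schwarz on the absolute values
  have habs_sum : ∀ a : Fin D → ℝ, (∑ j, a j ^ 2) = 1 → (∑ j, |a j|) ^ 2 ≤ D := by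
    intro a ha
    calc (∑ j, |a j|) ^ 2 ≤ (Finset.univ.card : ℝ) * ∑ j, |a j| ^ 2 :=
          sq_sum_le_card_mul_sum_sq
      _ = D := by simp [sq_abs, ha]
  ------------------------------------------------------------------
  -- bound for Bm
  ------------------------------------------------------------------
  have hBmle : ∀ j l, Bm j l ≤ φ₁ * D := by
    intro j l
    rw [hBm]
    refine ciSup_le fun x => ?_
    rw [abs_mul]
    nlinarith [keyj j x, keyj l x, sq_abs (φ j x), sq_abs (φ l x),
      sq_nonneg (|φ j x| - |φ l x|), abs_nonneg (φ j x), abs_nonneg (φ l x)]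
  have hBbound : ∀ e ∈ ((fun a : Fin D → ℝ => ∑ j, ∑ l, |a j| * |a l| * Bm j l) ''
        {a : Fin D → ℝ | ∑ j, a j ^ 2 = 1}), e ≤ φ₁ * (D : ℝ) ^ 2 := by
    rintro e ⟨a, ha, rfl⟩
    have h1 : (∑ j, ∑ l, |a j| * |a l| * Bm j l)
        ≤ ∑ j, ∑ l, |a j| * |a l| * (φ₁ * D) := by
      refine Finset.sum_le_sum fun j _ => Finset.sum_le_sum fun l _ => ?_
      exact mul_le_mul_of_nonneg_left (hBmle j l)
        (mul_nonneg (abs_nonneg _) (abs_nonneg _))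
    have h2 : (∑ j, ∑ l, |a j| * |a l| * (φ₁ * D))
        = (∑ j, |a j|) ^ 2 * (φ₁ * D) := by
      rw [sq, Finset.sum_mul_sum]
      simp [Finset.sum_mul, Finset.mul_sum, mul_assoc]
    have h3 := habs_sum a ha
    calc (∑ j, ∑ l, |a j| * |a l| * Bm j l) ≤ (∑ j, |a j|) ^ 2 * (φ₁ * D) := by
          rw [← h2]; exact h1
      _ ≤ D * (φ₁ * D) := mul_le_mul_of_nonneg_right h3 (by positivity)
      _ = φ₁ * (D:ℝ) ^ 2 := by ring
  have hρB : ρ Bm ≤ φ₁ * (D : ℝ) ^ 2 := by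
    rw [hρ]
    exact csSup_le (hne.image _) hBbound
  ------------------------------------------------------------------
  -- bound for Vm
  ------------------------------------------------------------------
  have hVm0 : ∀ j l, 0 ≤ Vm j l := fun j l => (hVm j l) ▸ Real.sqrt_nonneg _
  -- ∑∑ Vm² ≤ φ₁ D²
  have hVsum : (∑ j, ∑ l, Vm j l ^ 2) ≤ φ₁ * (D:ℝ) ^ 2 := by
    have hVsq : ∀ j l, Vm j l ^ 2 = ∫ x, (φ j x * φ l x) ^ 2 := by
      intro j l
      rw [hVm, Real.sq_sqrt (integral_nonneg fun x => sq_nonneg _)]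
    calc (∑ j, ∑ l, Vm j l ^ 2) = ∑ j, ∑ l, ∫ x, (φ j x * φ l x) ^ 2 := by
          simp_rw [hVsq]
      _ = ∫ x, ∑ j, ∑ l, (φ j x * φ l x) ^ 2 := by
          rw [integral_finset_sum _ (fun j _ => integrable_finset_sum _
            (fun l _ => hint_sq j l))]
          exact Finset.sum_congr rfl fun j _ =>
            (integral_finset_sum _ (fun l _ => hint_sq j l)).symm
      _ = ∫ x, (∑ j, φ j x ^ 2) ^ 2 := by
          congr 1
          funext x
          rw [sq, Finset.sum_mul_sum]
          exact Finset.sum_congr rfl fun j _ => Finset.sum_congr rfl fun l _ => by ring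
      _ ≤ ∫ x, φ₁ * D * (∑ j, φ j x ^ 2) := by
          refine integral_mono ?_ ?_ ?_
          · have : Integrable (fun x => ∑ j, ∑ l, (φ j x * φ l x) ^ 2) :=
              integrable_finset_sum _ (fun j _ => integrable_finset_sum _
                (fun l _ => hint_sq j l))
            refine this.congr ?_
            filter_upwards with x
            rw [sq, Finset.sum_mul_sum]
            exact Finset.sum_congr rfl fun j _ => Finset.sum_congr rfl fun l _ => by ring
          · refine (integrable_finset_sum _ (fun j _ => (hsq_int j).congr ?_)).const_mul _
            filter_upwards with x; exact (sq (φ j x)).symm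
          · intro x
            have hS0 : (0:ℝ) ≤ ∑ j, φ j x ^ 2 := Finset.sum_nonneg fun _ _ => sq_nonneg _
            calc (∑ j, φ j x ^ 2) ^ 2 = (∑ j, φ j x ^ 2) * (∑ j, φ j x ^ 2) := sq _
              _ ≤ φ₁ * D * (∑ j, φ j x ^ 2) := mul_le_mul_of_nonneg_right (key x) hS0
      _ = φ₁ * D * ∑ j, ∫ x, φ j x ^ 2 := by
          rw [integral_const_mul, integral_finset_sum _ (fun j _ => (hsq_int j).congr
            (by filter_upwards with x; exact (sq (φ j x)).symm))]
      _ = φ₁ * (D:ℝ) ^ 2 := by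
          have : ∀ j ∈ Finset.univ, (∫ x, φ j x ^ 2) = 1 := by
            intro j _
            have h1 : (∫ x, φ j x * φ j x) = 1 := by rw [hφ_on j j]; simp
            rw [← h1]
            congr 1; funext x; exact sq (φ j x)
          rw [Finset.sum_congr rfl this]
          simp; ring
  -- each element of the Vm image is ≤ sqrt(φ₁ D²)
  have hVbound : ∀ e ∈ ((fun a : Fin D → ℝ => ∑ j, ∑ l, |a j| * |a l| * Vm j l) ''
        {a : Fin D → ℝ | ∑ j, a j ^ 2 = 1}), e ≤ Real.sqrt (φ₁ * (D:ℝ) ^ 2) := by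
    rintro e ⟨a, ha, rfl⟩
    have hE0 : (0:ℝ) ≤ ∑ j, ∑ l, |a j| * |a l| * Vm j l :=
      Finset.sum_nonneg fun j _ => Finset.sum_nonneg fun l _ =>
        mul_nonneg (mul_nonneg (abs_nonneg _) (abs_nonneg _)) (hVm0 j l)
    rw [Real.le_sqrt hE0 (by positivity)]
    -- Cauchy–Schwarz over the product index set
    have hprod : (∑ j, ∑ l, |a j| * |a l| * Vm j l)
        = ∑ p : Fin D × Fin D, (|a p.1| * |a p.2|) * Vm p.1 p.2 := by
      rw [← Finset.sum_product']
      rfl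
    rw [hprod]
    calc (∑ p : Fin D × Fin D, (|a p.1| * |a p.2|) * Vm p.1 p.2) ^ 2
        ≤ (∑ p : Fin D × Fin D, (|a p.1| * |a p.2|) ^ 2) *
          (∑ p : Fin D × Fin D, Vm p.1 p.2 ^ 2) :=
          Finset.sum_mul_sq_le_sq_mul_sq _ _ _
      _ = ((∑ j, a j ^ 2) * (∑ j, a j ^ 2)) * (∑ j, ∑ l, Vm j l ^ 2) := by
          rw [← Finset.sum_product' (f := fun j l => Vm j l ^ 2)]
          congr 1
          rw [Finset.sum_mul_sum, ← Finset.sum_product']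
          exact Finset.sum_congr rfl fun p _ => by
            rw [mul_pow, sq_abs, sq_abs]
      _ ≤ 1 * (φ₁ * (D:ℝ) ^ 2) := by
          rw [ha]; norm_num
          exact hVsum
      _ = φ₁ * (D:ℝ) ^ 2 := one_mul _
  have hρV : ρ Vm ≤ Real.sqrt (φ₁ * (D:ℝ) ^ 2) := by
    rw [hρ]
    exact csSup_le (hne.image _) hVbound
  have hρV0 : 0 ≤ ρ Vm := by
    rw [hρ]
    obtain ⟨a, ha⟩ := hne
    have hmem : (∑ j, ∑ l, |a j| * |a l| * Vm j l) ∈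
        ((fun a : Fin D → ℝ => ∑ j, ∑ l, |a j| * |a l| * Vm j l) ''
          {a : Fin D → ℝ | ∑ j, a j ^ 2 = 1}) := ⟨a, ha, rfl⟩
    refine le_trans ?_ (le_csSup ⟨Real.sqrt (φ₁ * (D:ℝ) ^ 2), fun e he => hVbound e he⟩ hmem)
    exact Finset.sum_nonneg fun j _ => Finset.sum_nonneg fun l _ =>
      mul_nonneg (mul_nonneg (abs_nonneg _) (abs_nonneg _)) (hVm0 j l)
  refine ⟨?_, hρB⟩
  calc ρ Vm ^ 2 ≤ Real.sqrt (φ₁ * (D:ℝ) ^ 2) ^ 2 := by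
        exact pow_le_pow_left₀ hρV0 hρV 2
    _ = φ₁ * (D:ℝ) ^ 2 := Real.sq_sqrt (by positivity)
end
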